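/- arXiv:1909.09834 — 6 statements merged into one kernel-verified Lean document; each statement's English description precedes it below -/
import Mathlib

section
/- Assume hypothesis H(a). Then there exists a constant c₂ ∈ (0,1) such that for every ξ ∈ ℝ^N one has |a(ξ)| ≤ (1/c₂)(1 + |ξ|^{p−1}) and c₂|ξ|^p ≤ ⟨a(ξ), ξ⟩ ≤ (1/c₂)(1 + |ξ|^p). -/
/-!
Along a unit direction `u`, the radial profile `t ↦ t a₀(t) = ⟪a (t • u), u⟫` vanishes at `0` and
has derivative `⟪Da (t • u) u, u⟫`, which (a₂), (a₃) and the growth of `ω` pinch between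
`C₃ t^(p-2)` and `C₅ C₄ (1 + t^(p-1)) / t`. Integrating from `0` gives `t a₀(t) ≳ t^(p-1)`;
since the profile is increasing, integrating from `1` gives `t a₀(t) ≲ 1 + t^(p-1)`. Both
estimates on `a` follow because `‖a ξ‖ = ‖ξ‖ a₀ ‖ξ‖` and `⟪a ξ, ξ⟫ = ‖ξ‖ ‖a ξ‖`.
-/

open Set
open scoped RealInnerProductSpace

theorem monotoneOn_Ici_sub_of_hasDerivAt_le {a : ℝ} {f F f' F' : ℝ → ℝ}
    (hf : ContinuousOn f (Ici a)) (hF : ContinuousOn F (Ici a))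
    (hf' : ∀ x > a, HasDerivAt f (f' x) x) (hF' : ∀ x > a, HasDerivAt F (F' x) x)
    (hle : ∀ x > a, F' x ≤ f' x) :
    MonotoneOn (fun x => f x - F x) (Ici a) :=
  monotoneOn_of_hasDerivWithinAt_nonneg (convex_Ici a) (hf.sub hF)
    (fun x hx => by
      rw [interior_Ici] at hx
      exact ((hf' x hx).sub (hF' x hx)).hasDerivWithinAt)
    (fun x hx => by
      rw [interior_Ici] at hx
      exact sub_nonneg.2 (hle x hx))

theorem hasDerivAt_const_mul_rpow (c q : ℝ) {x : ℝ} (hx : 0 < x) :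
    HasDerivAt (fun x => c * x ^ q) (c * (q * x ^ (q - 1))) x :=
  (Real.hasDerivAt_rpow_const (Or.inl hx.ne')).const_mul c

theorem continuous_const_mul_rpow (c : ℝ) {q : ℝ} (hq : 0 ≤ q) :
    Continuous fun x : ℝ => c * x ^ q :=
  continuous_const.mul (Real.continuous_rpow_const hq)

section Profile

variable {g g' : ℝ → ℝ} {c q : ℝ}

theorem const_mul_rpow_le_of_le_deriv (hq : 0 < q) (hg : ContinuousOn g (Ici 0))
    (hg0 : g 0 = 0) (hg' : ∀ x > 0, HasDerivAt g (g' x) x)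
    (hle : ∀ x > 0, c * (q * x ^ (q - 1)) ≤ g' x) {t : ℝ} (ht : 0 ≤ t) :
    c * t ^ q ≤ g t := by
  have hmono := monotoneOn_Ici_sub_of_hasDerivAt_le hg
    (continuous_const_mul_rpow c hq.le).continuousOn hg'
    (fun x hx => hasDerivAt_const_mul_rpow c q hx) hle
  have h := hmono self_mem_Ici ht ht
  simp only [hg0, Real.zero_rpow hq.ne', mul_zero, sub_zero] at h
  linarith

theorem le_add_const_mul_rpow_of_deriv_le (hq : 0 < q) (hc : 0 ≤ c)
    (hg : ContinuousOn g (Ici 0)) (hg' : ∀ x > 0, HasDerivAt g (g' x) x)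
    (hpos : ∀ x > 0, 0 ≤ g' x) (hle : ∀ x > 1, g' x ≤ c * (q * x ^ (q - 1)))
    {t : ℝ} (ht : 0 ≤ t) :
    g t ≤ g 1 + c * t ^ q := by
  have hct : 0 ≤ c * t ^ q := mul_nonneg hc (Real.rpow_nonneg ht q)
  rcases le_total t 1 with ht1 | ht1
  · have hmono := monotoneOn_Ici_sub_of_hasDerivAt_le hg continuousOn_const hg'
      (fun x _ => hasDerivAt_const x 0) hpos
    have h := hmono ht (mem_Ici.2 zero_le_one) ht1
    simp only [sub_zero] at h
    linarith
  · have hmono := monotoneOn_Ici_sub_of_hasDerivAt_le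
      (continuous_const_mul_rpow c hq.le).continuousOn (hg.mono (Ici_subset_Ici.2 zero_le_one))
      (fun x hx => hasDerivAt_const_mul_rpow c q (zero_lt_one.trans hx))
      (fun x hx => hg' x (zero_lt_one.trans hx)) hle
    have h := hmono self_mem_Ici ht1 ht1
    simp only [Real.one_rpow, mul_one] at h
    linarith

end Profile

theorem le_one_add_rpow {t p : ℝ} (ht : 0 ≤ t) (hp : 1 ≤ p) : t ≤ 1 + t ^ p := by
  rcases le_total t 1 with ht1 | ht1
  · linarith [Real.rpow_nonneg ht p]
  · linarith [Real.self_le_rpow_of_one_le ht1 hp]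

theorem exists_growth_constant {p c₀ A B : ℝ} (hp : 1 < p) (hc₀ : 0 < c₀) (hA : 0 ≤ A)
    (hB : 0 ≤ B) :
    ∃ c ∈ Ioo (0 : ℝ) 1, ∀ t y : ℝ, 0 ≤ t → c₀ * t ^ (p - 1) ≤ y → y ≤ A + B * t ^ (p - 1) →
      y ≤ 1 / c * (1 + t ^ (p - 1)) ∧ c * t ^ p ≤ t * y ∧ t * y ≤ 1 / c * (1 + t ^ p) := by
  set D := A + B + c₀⁻¹ + 1
  have hD : 1 < D := by have := inv_pos.2 hc₀; linarith
  have hAB : A + B ≤ D := by have := inv_pos.2 hc₀; linarith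
  refine ⟨D⁻¹, ⟨by positivity, inv_lt_one_of_one_lt₀ hD⟩, fun t y ht hlow hup => ?_⟩
  rw [one_div, inv_inv]
  have hq : 0 ≤ t ^ (p - 1) := Real.rpow_nonneg ht _
  have htp : t ^ p = t * t ^ (p - 1) := by
    rw [← Real.rpow_one_add' ht (by linarith)]
    ring_nf
  have hDc₀ : D⁻¹ ≤ c₀ := by
    rw [inv_le_comm₀ (by positivity) hc₀]
    linarith
  refine ⟨?_, ?_, ?_⟩
  · nlinarith [mul_le_mul_of_nonneg_right hAB (by positivity : (0:ℝ) ≤ 1 + t ^ (p - 1)),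
      mul_nonneg hA hq]
  · rw [htp]
    nlinarith [mul_le_mul_of_nonneg_right hDc₀ hq]
  · have := le_one_add_rpow ht hp.le
    rw [htp] at this ⊢
    have htq : 0 ≤ t * t ^ (p - 1) := mul_nonneg ht hq
    nlinarith [mul_le_mul_of_nonneg_left hup ht, mul_le_mul_of_nonneg_left this hA,
      mul_le_mul_of_nonneg_right hAB (by positivity : (0:ℝ) ≤ 1 + t * t ^ (p - 1)),
      mul_nonneg hA htq, mul_nonneg hB htq]

section Radial

variable {E : Type*} [NormedAddCommGroup E] [InnerProductSpace ℝ E]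

theorem inner_apply_le_opNorm (T : E →L[ℝ] E) {u : E} (hu : ‖u‖ = 1) : ⟪T u, u⟫ ≤ ‖T‖ :=
  calc ⟪T u, u⟫ ≤ ‖T u‖ * ‖u‖ := real_inner_le_norm _ _
    _ ≤ ‖T‖ * ‖u‖ * ‖u‖ := by gcongr; exact T.le_opNorm u
    _ = ‖T‖ := by rw [hu, mul_one, mul_one]

theorem hasDerivAt_inner_apply_smul {a : E → E} {A : E →L[ℝ] E} {u : E} {t : ℝ}
    (h : HasFDerivAt a A (t • u)) :
    HasDerivAt (fun s : ℝ => ⟪a (s • u), u⟫) ⟪A u, u⟫ t := by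
  have hray : HasDerivAt (fun s : ℝ => a (s • u)) (A u) t := by
    have h' := h.comp_hasDerivAt t ((hasDerivAt_id t).smul_const u)
    rwa [one_smul] at h'
  simpa using hray.inner ℝ (hasDerivAt_const t u)

variable {a : E → E} {a₀ : ℝ → ℝ}

theorem inner_apply_smul_of_radial (ha0 : a 0 = 0) (harad : ∀ ξ, ξ ≠ 0 → a ξ = a₀ ‖ξ‖ • ξ)
    {u : E} (hu : ‖u‖ = 1) {t : ℝ} (ht : 0 ≤ t) :
    ⟪a (t • u), u⟫ = t * a₀ t := by
  rcases ht.eq_or_lt with rfl | ht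
  · simp [ha0]
  have htu : ‖t • u‖ = t := by rw [norm_smul, hu, mul_one, Real.norm_of_nonneg ht.le]
  have hne : t • u ≠ 0 := norm_pos_iff.1 (htu.symm ▸ ht)
  rw [harad _ hne, htu, real_inner_smul_left, real_inner_smul_left, real_inner_self_eq_norm_sq,
    hu]
  ring

variable {u : E}

theorem continuousOn_radial_profile (hacont : Continuous a) (ha0 : a 0 = 0)
    (harad : ∀ ξ, ξ ≠ 0 → a ξ = a₀ ‖ξ‖ • ξ) (hu : ‖u‖ = 1) :
    ContinuousOn (fun t => t * a₀ t) (Ici 0) :=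
  ((hacont.comp (continuous_id.smul continuous_const)).inner continuous_const).continuousOn.congr
    fun _ ht => (inner_apply_smul_of_radial ha0 harad hu ht).symm

theorem hasDerivAt_radial_profile {A : E →L[ℝ] E} (ha0 : a 0 = 0)
    (harad : ∀ ξ, ξ ≠ 0 → a ξ = a₀ ‖ξ‖ • ξ) (hu : ‖u‖ = 1) {t : ℝ} (ht : 0 < t)
    (hA : HasFDerivAt a A (t • u)) :
    HasDerivAt (fun t => t * a₀ t) ⟪A u, u⟫ t :=
  (hasDerivAt_inner_apply_smul hA).congr_of_eventuallyEq <|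
    Filter.eventually_of_mem (Ioi_mem_nhds ht) fun _ hs =>
      (inner_apply_smul_of_radial ha0 harad hu (le_of_lt hs)).symm

theorem radial_profile_bounds {Da : E → E →L[ℝ] E} {ω : ℝ → ℝ} {p C₃ C₄ C₅ : ℝ} (hp : 1 < p)
    (hC₃ : 0 ≤ C₃) (hC₄ : 0 ≤ C₄) (hC₅ : 0 ≤ C₅)
    (hω : ∀ t : ℝ, 0 < t → C₃ * t ^ (p - 1) ≤ ω t ∧ ω t ≤ C₄ * (1 + t ^ (p - 1)))
    (hacont : Continuous a) (ha0 : a 0 = 0) (harad : ∀ ξ, ξ ≠ 0 → a ξ = a₀ ‖ξ‖ • ξ)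
    (hDiff : ∀ ξ, ξ ≠ 0 → HasFDerivAt a (Da ξ) ξ)
    (hDa₂ : ∀ ξ, ξ ≠ 0 → ‖Da ξ‖ ≤ C₅ * ω ‖ξ‖ / ‖ξ‖)
    (hDa₃ : ∀ ξ, ξ ≠ 0 → ∀ y, (ω ‖ξ‖ / ‖ξ‖) * ‖y‖ ^ 2 ≤ ⟪Da ξ y, y⟫)
    (hu : ‖u‖ = 1) {t : ℝ} (ht : 0 ≤ t) :
    C₃ / (p - 1) * t ^ (p - 1) ≤ t * a₀ t ∧
      t * a₀ t ≤ a₀ 1 + 2 * C₄ * C₅ / (p - 1) * t ^ (p - 1) := by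
  have hq : 0 < p - 1 := by linarith
  have hnorm : ∀ s : ℝ, 0 < s → ‖s • u‖ = s := fun s hs => by
    rw [norm_smul, hu, mul_one, Real.norm_of_nonneg hs.le]
  have hne : ∀ s : ℝ, 0 < s → s • u ≠ 0 := fun s hs => norm_pos_iff.1 ((hnorm s hs).symm ▸ hs)
  have hderiv : ∀ s : ℝ, 0 < s → HasDerivAt (fun t => t * a₀ t) ⟪Da (s • u) u, u⟫ s :=
    fun s hs => hasDerivAt_radial_profile ha0 harad hu hs (hDiff _ (hne s hs))
  have hcont := continuousOn_radial_profile hacont ha0 harad hu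
  have hlow : ∀ s : ℝ, 0 < s → ω s / s ≤ ⟪Da (s • u) u, u⟫ := fun s hs => by
    simpa [hnorm s hs, hu] using hDa₃ _ (hne s hs) u
  have hup : ∀ s : ℝ, 0 < s → ⟪Da (s • u) u, u⟫ ≤ C₅ * ω s / s := fun s hs =>
    (inner_apply_le_opNorm _ hu).trans (by simpa [hnorm s hs] using hDa₂ _ (hne s hs))
  have hderiv_nonneg : ∀ s : ℝ, 0 < s → 0 ≤ ⟪Da (s • u) u, u⟫ := fun s hs =>
    (div_nonneg ((mul_nonneg hC₃ (Real.rpow_nonneg hs.le _)).trans (hω s hs).1) hs.le).trans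
      (hlow s hs)
  have hrpow : ∀ c s : ℝ, 0 < s → c / (p - 1) * ((p - 1) * s ^ (p - 1 - 1)) = c * s ^ (p - 1) / s :=
    fun c s hs => by rw [Real.rpow_sub_one hs.ne']; field_simp
  constructor
  · refine const_mul_rpow_le_of_le_deriv hq hcont (zero_mul _) hderiv (fun s hs => ?_) ht
    rw [hrpow C₃ s hs]
    exact (div_le_div_of_nonneg_right (hω s hs).1 hs.le).trans (hlow s hs)
  · have h := le_add_const_mul_rpow_of_deriv_le (c := 2 * C₄ * C₅ / (p - 1)) hq
      (by positivity) hcont hderiv hderiv_nonneg (fun s hs => ?_) ht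
    · simpa only [one_mul] using h
    have hs0 : 0 < s := zero_lt_one.trans hs
    rw [hrpow _ s hs0]
    refine (hup s hs0).trans (div_le_div_of_nonneg_right ?_ hs0.le)
    have h1 : 1 ≤ s ^ (p - 1) := Real.one_le_rpow hs.le hq.le
    calc C₅ * ω s ≤ C₅ * (C₄ * (1 + s ^ (p - 1))) := by gcongr; exact (hω s hs0).2
      _ ≤ 2 * C₄ * C₅ * s ^ (p - 1) := by nlinarith [mul_nonneg hC₄ hC₅]

end Radial

theorem growth_estimates_of_HypA_general
    {N : ℕ} {p : ℝ} (hp : 1 < p)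
    (a : EuclideanSpace ℝ (Fin N) → EuclideanSpace ℝ (Fin N))
    (a₀ : ℝ → ℝ) (ω : ℝ → ℝ)
    (Da : EuclideanSpace ℝ (Fin N) →
      (EuclideanSpace ℝ (Fin N) →L[ℝ] EuclideanSpace ℝ (Fin N)))
    (C₃ C₄ C₅ : ℝ)
    (hC₃ : 0 < C₃) (hC₄ : 0 < C₄) (hC₅ : 0 < C₅)
    -- ω is C¹ on (0,∞) with C₁ ≤ tω'(t)/ω(t) ≤ C₂ and C₃ t^(p-1) ≤ ω(t) ≤ C₄(1+t^(p-1))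
    (hω₂ : ∀ t : ℝ, 0 < t → C₃ * t ^ (p - 1) ≤ ω t ∧ ω t ≤ C₄ * (1 + t ^ (p - 1)))
    -- (a₁): a is continuous, radial, generated by a₀
    (hacont : Continuous a)
    (ha0 : a 0 = 0)
    (harad : ∀ ξ : EuclideanSpace ℝ (Fin N), ξ ≠ 0 → a ξ = a₀ ‖ξ‖ • ξ)
    -- (a₂): a is differentiable away from the origin with the stated bound
    (hDiff : ∀ ξ : EuclideanSpace ℝ (Fin N), ξ ≠ 0 → HasFDerivAt a (Da ξ) ξ)
    (hDa₂ : ∀ ξ : EuclideanSpace ℝ (Fin N), ξ ≠ 0 → ‖Da ξ‖ ≤ C₅ * ω ‖ξ‖ / ‖ξ‖)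
    -- (a₃): ellipticity
    (hDa₃ : ∀ ξ : EuclideanSpace ℝ (Fin N), ξ ≠ 0 →
      ∀ y : EuclideanSpace ℝ (Fin N), (ω ‖ξ‖ / ‖ξ‖) * ‖y‖ ^ 2 ≤ ⟪Da ξ y, y⟫) :
    ∃ c₂ : ℝ, c₂ ∈ Set.Ioo (0:ℝ) 1 ∧
      ∀ ξ : EuclideanSpace ℝ (Fin N),
        ‖a ξ‖ ≤ (1 / c₂) * (1 + ‖ξ‖ ^ (p - 1)) ∧
        c₂ * ‖ξ‖ ^ p ≤ ⟪a ξ, ξ⟫ ∧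
        ⟪a ξ, ξ⟫ ≤ (1 / c₂) * (1 + ‖ξ‖ ^ p) := by
  have hq : 0 < p - 1 := by linarith
  obtain ⟨c, hc, hgrowth⟩ := exists_growth_constant (A := |a₀ 1|)
    (B := 2 * C₄ * C₅ / (p - 1)) hp (div_pos hC₃ hq) (abs_nonneg _) (by positivity)
  refine ⟨c, hc, fun ξ => ?_⟩
  rcases eq_or_ne ξ 0 with rfl | hξ
  · simpa [ha0] using hgrowth 0 0 le_rfl (by rw [Real.zero_rpow hq.ne', mul_zero])
      (by positivity)
  obtain ⟨hlow, hup⟩ := radial_profile_bounds hp hC₃.le hC₄.le hC₅.le hω₂ hacont ha0 harad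
    hDiff hDa₂ hDa₃ (norm_smul_inv_norm (𝕜 := ℝ) hξ) (norm_nonneg ξ)
  have ha₀ : 0 ≤ a₀ ‖ξ‖ := (mul_nonneg_iff_of_pos_left (norm_pos_iff.2 hξ)).1 <|
    (by positivity : 0 ≤ C₃ / (p - 1) * ‖ξ‖ ^ (p - 1)).trans hlow
  have hnorm : ‖a ξ‖ = ‖ξ‖ * a₀ ‖ξ‖ := by
    rw [harad ξ hξ, norm_smul, Real.norm_of_nonneg ha₀, mul_comm]
  have hinner : ⟪a ξ, ξ⟫ = ‖ξ‖ * (‖ξ‖ * a₀ ‖ξ‖) := by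
    rw [harad ξ hξ, real_inner_smul_left, real_inner_self_eq_norm_sq]
    ring
  rw [hnorm, hinner]
  exact hgrowth _ _ (norm_nonneg ξ) hlow (hup.trans (by gcongr; exact le_abs_self _))

/-- Under hypothesis H(a), there exists `c₂ ∈ (0,1)` such that
`|a(ξ)| ≤ (1/c₂)(1 + |ξ|^(p-1))` and `c₂|ξ|^p ≤ ⟨a(ξ), ξ⟩ ≤ (1/c₂)(1 + |ξ|^p)`
for all `ξ ∈ ℝ^N`. -/
theorem growth_estimates_of_HypA
    {N : ℕ} (hN : 1 ≤ N) {p : ℝ} (hp : 1 < p)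
    (a : EuclideanSpace ℝ (Fin N) → EuclideanSpace ℝ (Fin N))
    (a₀ : ℝ → ℝ) (ω : ℝ → ℝ)
    (Da : EuclideanSpace ℝ (Fin N) →
      (EuclideanSpace ℝ (Fin N) →L[ℝ] EuclideanSpace ℝ (Fin N)))
    (C₁ C₂ C₃ C₄ C₅ : ℝ)
    (hC₁ : 0 < C₁) (hC₂ : 0 < C₂) (hC₃ : 0 < C₃) (hC₄ : 0 < C₄) (hC₅ : 0 < C₅)
    -- ω is C¹ on (0,∞) with C₁ ≤ tω'(t)/ω(t) ≤ C₂ and C₃ t^(p-1) ≤ ω(t) ≤ C₄(1+t^(p-1))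
    (hωC1 : ContDiffOn ℝ 1 ω (Set.Ioi (0:ℝ)))
    (hω₁ : ∀ t : ℝ, 0 < t → C₁ ≤ t * deriv ω t / ω t ∧ t * deriv ω t / ω t ≤ C₂)
    (hω₂ : ∀ t : ℝ, 0 < t → C₃ * t ^ (p - 1) ≤ ω t ∧ ω t ≤ C₄ * (1 + t ^ (p - 1)))
    -- (a₁): a is continuous, radial, generated by a₀
    (hacont : Continuous a)
    (ha0 : a 0 = 0)
    (harad : ∀ ξ : EuclideanSpace ℝ (Fin N), ξ ≠ 0 → a ξ = a₀ ‖ξ‖ • ξ)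
    (ha₀pos : ∀ t : ℝ, 0 < t → 0 < a₀ t)
    (ha₀C1 : ContDiffOn ℝ 1 a₀ (Set.Ioi (0:ℝ)))
    (hmono : StrictMonoOn (fun t : ℝ => t * a₀ t) (Set.Ioi (0:ℝ)))
    (hlim0 : Filter.Tendsto (fun t : ℝ => t * a₀ t)
      (nhdsWithin 0 (Set.Ioi 0)) (nhds 0))
    (hlim1 : ∃ L : ℝ, -1 < L ∧ Filter.Tendsto (fun t : ℝ => t * deriv a₀ t / a₀ t)
      (nhdsWithin 0 (Set.Ioi 0)) (nhds L))
    -- (a₂): a is differentiable away from the origin with the stated bound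
    (hDiff : ∀ ξ : EuclideanSpace ℝ (Fin N), ξ ≠ 0 → HasFDerivAt a (Da ξ) ξ)
    (hDa₂ : ∀ ξ : EuclideanSpace ℝ (Fin N), ξ ≠ 0 → ‖Da ξ‖ ≤ C₅ * ω ‖ξ‖ / ‖ξ‖)
    -- (a₃): ellipticity
    (hDa₃ : ∀ ξ : EuclideanSpace ℝ (Fin N), ξ ≠ 0 →
      ∀ y : EuclideanSpace ℝ (Fin N), (ω ‖ξ‖ / ‖ξ‖) * ‖y‖ ^ 2 ≤ ⟪Da ξ y, y⟫) :
    ∃ c₂ : ℝ, c₂ ∈ Set.Ioo (0:ℝ) 1 ∧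
      ∀ ξ : EuclideanSpace ℝ (Fin N),
        ‖a ξ‖ ≤ (1 / c₂) * (1 + ‖ξ‖ ^ (p - 1)) ∧
        c₂ * ‖ξ‖ ^ p ≤ ⟪a ξ, ξ⟫ ∧
        ⟪a ξ, ξ⟫ ≤ (1 / c₂) * (1 + ‖ξ‖ ^ p) :=
  growth_estimates_of_HypA_general hp a a₀ ω Da C₃ C₄ C₅ hC₃ hC₄ hC₅ hω₂ hacont ha0 harad hDiff hDa₂
    hDa₃
end

section
/- Assume hypothesis H(a), and define G₀(t) = ∫₀^t s·a₀(s) ds for t ≥ 0 and G(ξ) = G₀(|ξ|) for ξ ∈ ℝ^N. Then there exists a constant c₂ ∈ (0,1) such that c₂|ξ|^p ≤ G(ξ) ≤ (1/c₂)(1 + |ξ|^p) for every ξ ∈ ℝ^N. -/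
open scoped RealInnerProductSpace

set_option maxHeartbeats 1000000 in
/-- Under hypothesis H(a), with `G₀(t) = ∫₀ᵗ s·a₀(s) ds` and `G(ξ) = G₀(|ξ|)`,
there exists `c₂ ∈ (0,1)` such that `c₂|ξ|^p ≤ G(ξ) ≤ (1/c₂)(1 + |ξ|^p)`
for every `ξ ∈ ℝ^N`. -/
theorem potential_growth_estimates_of_HypA
    {N : ℕ} (hN : 1 ≤ N) {p : ℝ} (hp : 1 < p)
    (a : EuclideanSpace ℝ (Fin N) → EuclideanSpace ℝ (Fin N))
    (a₀ : ℝ → ℝ) (ω : ℝ → ℝ)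
    (Da : EuclideanSpace ℝ (Fin N) →
      (EuclideanSpace ℝ (Fin N) →L[ℝ] EuclideanSpace ℝ (Fin N)))
    (C₁ C₂ C₃ C₄ C₅ : ℝ)
    (hC₁ : 0 < C₁) (hC₂ : 0 < C₂) (hC₃ : 0 < C₃) (hC₄ : 0 < C₄) (hC₅ : 0 < C₅)
    -- ω is C¹ on (0,∞) with C₁ ≤ tω'(t)/ω(t) ≤ C₂ and C₃ t^(p-1) ≤ ω(t) ≤ C₄(1+t^(p-1))
    (hωC1 : ContDiffOn ℝ 1 ω (Set.Ioi (0:ℝ)))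
    (hω₁ : ∀ t : ℝ, 0 < t → C₁ ≤ t * deriv ω t / ω t ∧ t * deriv ω t / ω t ≤ C₂)
    (hω₂ : ∀ t : ℝ, 0 < t → C₃ * t ^ (p - 1) ≤ ω t ∧ ω t ≤ C₄ * (1 + t ^ (p - 1)))
    -- (a₁): a is continuous, radial, generated by a₀
    (hacont : Continuous a)
    (ha0 : a 0 = 0)
    (harad : ∀ ξ : EuclideanSpace ℝ (Fin N), ξ ≠ 0 → a ξ = a₀ ‖ξ‖ • ξ)
    (ha₀pos : ∀ t : ℝ, 0 < t → 0 < a₀ t)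
    (ha₀C1 : ContDiffOn ℝ 1 a₀ (Set.Ioi (0:ℝ)))
    (hmono : StrictMonoOn (fun t : ℝ => t * a₀ t) (Set.Ioi (0:ℝ)))
    (hlim0 : Filter.Tendsto (fun t : ℝ => t * a₀ t)
      (nhdsWithin 0 (Set.Ioi 0)) (nhds 0))
    (hlim1 : ∃ L : ℝ, -1 < L ∧ Filter.Tendsto (fun t : ℝ => t * deriv a₀ t / a₀ t)
      (nhdsWithin 0 (Set.Ioi 0)) (nhds L))
    -- (a₂): a is differentiable away from the origin with the stated bound
    (hDiff : ∀ ξ : EuclideanSpace ℝ (Fin N), ξ ≠ 0 → HasFDerivAt a (Da ξ) ξ)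
    (hDa₂ : ∀ ξ : EuclideanSpace ℝ (Fin N), ξ ≠ 0 → ‖Da ξ‖ ≤ C₅ * ω ‖ξ‖ / ‖ξ‖)
    -- (a₃): ellipticity
    (hDa₃ : ∀ ξ : EuclideanSpace ℝ (Fin N), ξ ≠ 0 →
      ∀ y : EuclideanSpace ℝ (Fin N), (ω ‖ξ‖ / ‖ξ‖) * ‖y‖ ^ 2 ≤ ⟪Da ξ y, y⟫)
    -- G₀(t) = ∫₀ᵗ s·a₀(s) ds and G(ξ) = G₀(|ξ|)
    (G₀ : ℝ → ℝ) (hG₀ : ∀ t : ℝ, 0 ≤ t → G₀ t = ∫ s in (0:ℝ)..t, s * a₀ s)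
    (G : EuclideanSpace ℝ (Fin N) → ℝ)
    (hG : ∀ ξ : EuclideanSpace ℝ (Fin N), G ξ = G₀ ‖ξ‖) :
    ∃ c₂ : ℝ, c₂ ∈ Set.Ioo (0:ℝ) 1 ∧
      ∀ ξ : EuclideanSpace ℝ (Fin N),
        c₂ * ‖ξ‖ ^ p ≤ G ξ ∧ G ξ ≤ (1 / c₂) * (1 + ‖ξ‖ ^ p) := by
  -- unit vector
  have hη : ‖(EuclideanSpace.single (⟨0, hN⟩ : Fin N) (1:ℝ) : EuclideanSpace ℝ (Fin N))‖ = 1 := by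
    rw [EuclideanSpace.norm_single]; norm_num
  set η : EuclideanSpace ℝ (Fin N) := EuclideanSpace.single ⟨0, hN⟩ 1 with hηdef
  have hsη : ∀ r : ℝ, 0 < r → ‖r • η‖ = r := by
    intro r hr
    rw [norm_smul, hη, Real.norm_eq_abs, abs_of_pos hr, mul_one]
  have hsηne : ∀ r : ℝ, 0 < r → r • η ≠ 0 := by
    intro r hr h
    have := hsη r hr
    rw [h, norm_zero] at this; linarith
  set f : ℝ → ℝ := fun s => ⟪a (s • η), η⟫ with hfdef
  have hf0 : f 0 = 0 := by simp [hfdef, ha0]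
  have hfcont : Continuous f :=
    (hacont.comp (continuous_id.smul continuous_const)).inner continuous_const
  have hfval : ∀ s : ℝ, 0 < s → f s = s * a₀ s := by
    intro s hs
    simp only [hfdef]
    rw [harad _ (hsηne s hs), hsη s hs, inner_smul_left, inner_smul_left,
      real_inner_self_eq_norm_sq, hη]
    simp [mul_comm]
  have hfderiv : ∀ r : ℝ, 0 < r → HasDerivAt f ⟪Da (r • η) η, η⟫ r := by
    intro r hr
    have h1 : HasDerivAt (fun s : ℝ => s • η) η r := by
      simpa using (hasDerivAt_id r).smul_const η
    have h2 : HasDerivAt (fun s : ℝ => a (s • η)) (Da (r • η) η) r :=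
      (hDiff (r • η) (hsηne r hr)).comp_hasDerivAt r h1
    have h3 := h2.inner ℝ (hasDerivAt_const r η)
    simpa using h3
  have hf'ub : ∀ r : ℝ, 0 < r → ⟪Da (r • η) η, η⟫ ≤ C₅ * ω r / r := by
    intro r hr
    have h1 : ⟪Da (r • η) η, η⟫ ≤ ‖Da (r • η) η‖ * ‖η‖ := real_inner_le_norm _ _
    have h2 : ‖Da (r • η) η‖ ≤ ‖Da (r • η)‖ * ‖η‖ := (Da (r • η)).le_opNorm η
    have h3 := hDa₂ (r • η) (hsηne r hr)
    rw [hsη r hr] at h3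
    rw [hη, mul_one] at h1 h2
    linarith
  have hf'lb : ∀ r : ℝ, 0 < r → ω r / r ≤ ⟪Da (r • η) η, η⟫ := by
    intro r hr
    have := hDa₃ (r • η) (hsηne r hr) η
    rw [hsη r hr, hη] at this
    simpa using this
  -- ω facts
  have hωpos : ∀ t : ℝ, 0 < t → 0 < ω t := by
    intro t ht
    have h1 := (hω₂ t ht).1
    have h2 : (0:ℝ) < C₃ * t ^ (p - 1) := by positivity
    linarith
  have hωdiff : ∀ t : ℝ, 0 < t → HasDerivAt ω (deriv ω t) t := by
    intro t ht
    exact ((hωC1.differentiableOn one_ne_zero).differentiableAt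
      (isOpen_Ioi.mem_nhds ht)).hasDerivAt
  have hωineq : ∀ t : ℝ, 0 < t → C₁ * ω t ≤ t * deriv ω t := by
    intro t ht
    have h1 := (hω₁ t ht).1
    have h2 := hωpos t ht
    exact (le_div_iff₀ h2).mp h1
  -- monotonicity of ω r / r^C₁
  have hωmono : ∀ r s : ℝ, 0 < r → r ≤ s → ω r * s ^ C₁ ≤ ω s * r ^ C₁ := by
    intro r s hr hrs
    have hs : 0 < s := lt_of_lt_of_le hr hrs
    set F : ℝ → ℝ := fun x => ω x * x ^ (-C₁) with hF
    have hder : ∀ x : ℝ, 0 < x →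
        HasDerivAt F (deriv ω x * x ^ (-C₁) + ω x * (-C₁ * x ^ (-C₁ - 1))) x := by
      intro x hx
      exact (hωdiff x hx).mul (Real.hasDerivAt_rpow_const (Or.inl hx.ne'))
    have hmonoF : MonotoneOn F (Set.Icc r s) := by
      apply monotoneOn_of_deriv_nonneg (convex_Icc r s)
      · apply ContinuousOn.mul
        · exact (hωC1.continuousOn).mono (fun x hx => lt_of_lt_of_le hr hx.1)
        · exact ContinuousOn.rpow_const continuousOn_id
            (fun x hx => Or.inl (ne_of_gt (lt_of_lt_of_le hr hx.1)))
      · intro x hx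
        rw [interior_Icc] at hx
        have hx0 : 0 < x := hr.trans hx.1
        exact (hder x hx0).differentiableAt.differentiableWithinAt
      · intro x hx
        rw [interior_Icc] at hx
        have hx0 : 0 < x := hr.trans hx.1
        rw [(hder x hx0).deriv]
        have e1 : x ^ (-C₁) = x ^ (-C₁ - 1) * x := by
          have h4 : -C₁ = -C₁ - 1 + 1 := by ring
          rw [h4, Real.rpow_add_one hx0.ne']; norm_num
        have e2 : (0:ℝ) < x ^ (-C₁ - 1) := Real.rpow_pos_of_pos hx0 _
        have h3 := hωineq x hx0
        calc (0:ℝ) ≤ x ^ (-C₁ - 1) * (x * deriv ω x - C₁ * ω x) := by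
              apply mul_nonneg e2.le; linarith
          _ = deriv ω x * x ^ (-C₁) + ω x * (-C₁ * x ^ (-C₁ - 1)) := by
              rw [e1]; ring
    have hFF : F r ≤ F s := hmonoF ⟨le_rfl, hrs⟩ ⟨hrs, le_rfl⟩ hrs
    simp only [hF] at hFF
    have hrC : (0:ℝ) < r ^ C₁ := Real.rpow_pos_of_pos hr _
    have hsC : (0:ℝ) < s ^ C₁ := Real.rpow_pos_of_pos hs _
    have er : r ^ (-C₁) = (r ^ C₁)⁻¹ := by rw [Real.rpow_neg hr.le]
    have es : s ^ (-C₁) = (s ^ C₁)⁻¹ := by rw [Real.rpow_neg hs.le]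
    rw [er, es] at hFF
    have hgoal := mul_le_mul_of_nonneg_right hFF (by positivity : (0:ℝ) ≤ r ^ C₁ * s ^ C₁)
    calc ω r * s ^ C₁ = ω r * (r ^ C₁)⁻¹ * (r ^ C₁ * s ^ C₁) := by
          field_simp
      _ ≤ ω s * (s ^ C₁)⁻¹ * (r ^ C₁ * s ^ C₁) := hgoal
      _ = ω s * r ^ C₁ := by field_simp
  -- upper pointwise bound: f s ≤ C₅/C₁ * ω s
  have hfub : ∀ s : ℝ, 0 < s → f s ≤ C₅ / C₁ * ω s := by
    intro s hs
    have hsC : (0:ℝ) < s ^ C₁ := Real.rpow_pos_of_pos hs _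
    have hωs : 0 < ω s := hωpos s hs
    set K : ℝ := C₅ * ω s / (C₁ * s ^ C₁) with hK
    have hKpos : 0 < K := by positivity
    have key : ∀ ε : ℝ, ε ∈ Set.Ioo 0 s → f s ≤ f ε + C₅ / C₁ * ω s := by
      intro ε hε
      set h : ℝ → ℝ := fun x => f x - K * x ^ C₁ with hh
      have hder : ∀ x : ℝ, 0 < x →
          HasDerivAt h (⟪Da (x • η) η, η⟫ - K * (C₁ * x ^ (C₁ - 1))) x := by
        intro x hx
        exact (hfderiv x hx).sub
          ((Real.hasDerivAt_rpow_const (Or.inl hx.ne')).const_mul K)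
      have hanti : AntitoneOn h (Set.Icc ε s) := by
        apply antitoneOn_of_deriv_nonpos (convex_Icc ε s)
        · apply ContinuousOn.sub hfcont.continuousOn
          exact ContinuousOn.mul continuousOn_const
            (ContinuousOn.rpow_const continuousOn_id
              (fun x hx => Or.inl (ne_of_gt (lt_of_lt_of_le hε.1 hx.1))))
        · intro x hx
          rw [interior_Icc] at hx
          exact (hder x (hε.1.trans hx.1)).differentiableAt.differentiableWithinAt
        · intro x hx
          rw [interior_Icc] at hx
          have hx0 : 0 < x := hε.1.trans hx.1
          rw [(hder x hx0).deriv]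
          have h1 := hf'ub x hx0
          have h2 : ω x * s ^ C₁ ≤ ω s * x ^ C₁ := hωmono x s hx0 hx.2.le
          have e1 : K * (C₁ * x ^ (C₁ - 1)) = C₅ * ω s * x ^ C₁ / (s ^ C₁ * x) := by
            rw [Real.rpow_sub hx0, Real.rpow_one, hK]
            field_simp
          have h3 : C₅ * ω x / x ≤ C₅ * ω s * x ^ C₁ / (s ^ C₁ * x) := by
            rw [div_le_div_iff₀ hx0 (by positivity)]
            nlinarith [mul_le_mul_of_nonneg_right (mul_le_mul_of_nonneg_left h2 hC₅.le) hx0.le]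
          rw [e1]
          linarith
      have h4 : h s ≤ h ε := hanti ⟨le_rfl, hε.2.le⟩ ⟨hε.2.le, le_rfl⟩ hε.2.le
      simp only [hh] at h4
      have e2 : K * s ^ C₁ = C₅ / C₁ * ω s := by
        rw [hK]; field_simp
      have e3 : 0 ≤ K * ε ^ C₁ := mul_nonneg hKpos.le (Real.rpow_nonneg hε.1.le _)
      linarith
    have hev : ∀ᶠ ε in nhdsWithin 0 (Set.Ioi 0), f s ≤ f ε + C₅ / C₁ * ω s := by
      filter_upwards [Ioo_mem_nhdsGT_of_mem (Set.mem_Ico.mpr ⟨le_rfl, hs⟩)] with ε hε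
      exact key ε hε
    have htend : Filter.Tendsto (fun ε => f ε + C₅ / C₁ * ω s)
        (nhdsWithin 0 (Set.Ioi 0)) (nhds (0 + C₅ / C₁ * ω s)) := by
      apply Filter.Tendsto.add _ tendsto_const_nhds
      have := (hfcont.tendsto 0).mono_left (nhdsWithin_le_nhds (s := Set.Ioi (0:ℝ)))
      rwa [hf0] at this
    have := ge_of_tendsto htend hev
    linarith
  -- lower pointwise bound: C₃/(p-1) * s^(p-1) ≤ f s
  have hflb : ∀ s : ℝ, 0 < s → C₃ / (p - 1) * s ^ (p - 1) ≤ f s := by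
    intro s hs
    have hp1 : (0:ℝ) < p - 1 := by linarith
    set c : ℝ := C₃ / (p - 1) with hc
    have hcpos : 0 < c := by positivity
    have key : ∀ ε : ℝ, ε ∈ Set.Ioo 0 s → c * s ^ (p - 1) - c * ε ^ (p - 1) ≤ f s := by
      intro ε hε
      set h : ℝ → ℝ := fun x => f x - c * x ^ (p - 1) with hh
      have hder : ∀ x : ℝ, 0 < x →
          HasDerivAt h (⟪Da (x • η) η, η⟫ - c * ((p - 1) * x ^ (p - 1 - 1))) x := by
        intro x hx
        exact (hfderiv x hx).sub
          ((Real.hasDerivAt_rpow_const (Or.inl hx.ne')).const_mul c)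
      have hmon : MonotoneOn h (Set.Icc ε s) := by
        apply monotoneOn_of_deriv_nonneg (convex_Icc ε s)
        · apply ContinuousOn.sub hfcont.continuousOn
          exact ContinuousOn.mul continuousOn_const
            (ContinuousOn.rpow_const continuousOn_id
              (fun x hx => Or.inl (ne_of_gt (lt_of_lt_of_le hε.1 hx.1))))
        · intro x hx
          rw [interior_Icc] at hx
          exact (hder x (hε.1.trans hx.1)).differentiableAt.differentiableWithinAt
        · intro x hx
          rw [interior_Icc] at hx
          have hx0 : 0 < x := hε.1.trans hx.1
          rw [(hder x hx0).deriv]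
          have h1 := hf'lb x hx0
          have h2 := (hω₂ x hx0).1
          have e1 : c * ((p - 1) * x ^ (p - 1 - 1)) = C₃ * x ^ (p - 1) / x := by
            rw [Real.rpow_sub hx0, Real.rpow_one, hc]
            field_simp
          have h3 : C₃ * x ^ (p - 1) / x ≤ ω x / x := by gcongr
          rw [e1]; linarith
      have h4 : h ε ≤ h s := hmon ⟨le_rfl, hε.2.le⟩ ⟨hε.2.le, le_rfl⟩ hε.2.le
      simp only [hh] at h4
      have h5 : 0 ≤ f ε := by
        rw [hfval ε hε.1]
        exact le_of_lt (mul_pos hε.1 (ha₀pos ε hε.1))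
      linarith
    have hev : ∀ᶠ ε in nhdsWithin 0 (Set.Ioi 0),
        c * s ^ (p - 1) - c * ε ^ (p - 1) ≤ f s := by
      filter_upwards [Ioo_mem_nhdsGT_of_mem (Set.mem_Ico.mpr ⟨le_rfl, hs⟩)] with ε hε
      exact key ε hε
    have htend : Filter.Tendsto (fun ε : ℝ => c * s ^ (p - 1) - c * ε ^ (p - 1))
        (nhdsWithin 0 (Set.Ioi 0)) (nhds (c * s ^ (p - 1) - c * 0 ^ (p - 1))) := by
      apply Filter.Tendsto.sub tendsto_const_nhds
      apply Filter.Tendsto.const_mul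
      have : ContinuousAt (fun x : ℝ => x ^ (p - 1)) 0 :=
        Real.continuousAt_rpow_const 0 (p - 1) (Or.inr hp1.le)
      exact (this.tendsto).mono_left (nhdsWithin_le_nhds (s := Set.Ioi (0:ℝ)))
    rw [Real.zero_rpow hp1.ne'] at htend
    have := le_of_tendsto htend hev
    linarith
  have hp1 : (0:ℝ) < p - 1 := by linarith
  have hpm1 : (-1:ℝ) < p - 1 := by linarith
  -- G₀ in terms of f
  have hG0eq : ∀ t : ℝ, 0 < t → G₀ t = ∫ s in (0:ℝ)..t, f s := by
    intro t ht
    rw [hG₀ t ht.le, intervalIntegral.integral_of_le ht.le,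
      intervalIntegral.integral_of_le ht.le]
    apply MeasureTheory.setIntegral_congr_fun measurableSet_Ioc
    intro s hs
    exact (hfval s hs.1).symm
  -- lower bound on G₀
  have hGlb : ∀ t : ℝ, 0 < t → C₃ / (p * (p - 1)) * t ^ p ≤ G₀ t := by
    intro t ht
    rw [hG0eq t ht]
    have hint : ∫ s in (0:ℝ)..t, C₃ / (p - 1) * s ^ (p - 1)
        = C₃ / (p * (p - 1)) * t ^ p := by
      rw [intervalIntegral.integral_const_mul, integral_rpow (Or.inl hpm1)]
      have e : p - 1 + 1 = p := by ring
      rw [e, Real.zero_rpow (by linarith : p ≠ 0)]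
      field_simp
      ring
    rw [← hint]
    apply intervalIntegral.integral_mono_on ht.le
    · exact (intervalIntegral.intervalIntegrable_rpow' hpm1).const_mul _
    · exact hfcont.intervalIntegrable _ _
    · intro s hs
      rcases eq_or_lt_of_le hs.1 with h | h
      · rw [← h, hf0, Real.zero_rpow hp1.ne', mul_zero]
      · exact hflb s h
  -- upper bound on G₀
  have hGub : ∀ t : ℝ, 0 < t → G₀ t ≤ C₅ * C₄ / C₁ * (t + t ^ p / p) := by
    intro t ht
    rw [hG0eq t ht]
    have hint : ∫ s in (0:ℝ)..t, C₅ * C₄ / C₁ * (1 + s ^ (p - 1))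
        = C₅ * C₄ / C₁ * (t + t ^ p / p) := by
      rw [intervalIntegral.integral_const_mul]
      congr 1
      rw [intervalIntegral.integral_add intervalIntegrable_const
        (intervalIntegral.intervalIntegrable_rpow' hpm1),
        intervalIntegral.integral_const, integral_rpow (Or.inl hpm1)]
      have e : p - 1 + 1 = p := by ring
      rw [e, Real.zero_rpow (by linarith : p ≠ 0)]
      simp
    rw [← hint]
    apply intervalIntegral.integral_mono_on ht.le
    · exact hfcont.intervalIntegrable _ _
    · exact (intervalIntegrable_const.add
        (intervalIntegral.intervalIntegrable_rpow' hpm1)).const_mul _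
    · intro s hs
      rcases eq_or_lt_of_le hs.1 with h | h
      · rw [← h, hf0]
        have : (0:ℝ) ≤ (0:ℝ) ^ (p - 1) := Real.rpow_nonneg le_rfl _
        positivity
      · calc f s ≤ C₅ / C₁ * ω s := hfub s h
          _ ≤ C₅ / C₁ * (C₄ * (1 + s ^ (p - 1))) := by
              apply mul_le_mul_of_nonneg_left (hω₂ s h).2 (by positivity)
          _ = C₅ * C₄ / C₁ * (1 + s ^ (p - 1)) := by ring
  -- t + t^p/p ≤ 2 (1 + t^p)
  have hle2 : ∀ t : ℝ, 0 ≤ t → t + t ^ p / p ≤ 2 * (1 + t ^ p) := by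
    intro t htt
    have hpw : 0 ≤ t ^ p := Real.rpow_nonneg htt p
    have h1 : t ≤ 1 + t ^ p := by
      rcases le_total t 1 with h | h
      · linarith
      · have h2 : t ^ (1:ℝ) ≤ t ^ p := Real.rpow_le_rpow_of_exponent_le h hp.le
        rw [Real.rpow_one] at h2
        linarith
    have h3 : t ^ p / p ≤ t ^ p := div_le_self hpw (by linarith)
    linarith
  -- constants
  set Kl : ℝ := C₃ / (p * (p - 1)) with hKl
  set Ku : ℝ := 2 * (C₅ * C₄ / C₁) with hKu
  have hKlpos : 0 < Kl := by rw [hKl]; positivity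
  have hKupos : 0 < Ku := by rw [hKu]; positivity
  set m : ℝ := min Kl (min (1 / Ku) (1 / 2)) with hm
  have hmpos : 0 < m := by
    apply lt_min hKlpos
    apply lt_min (by positivity) (by norm_num)
  have hm1 : m < 1 := by
    calc m ≤ min (1 / Ku) (1 / 2) := min_le_right _ _
      _ ≤ 1 / 2 := min_le_right _ _
      _ < 1 := by norm_num
  have hmKl : m ≤ Kl := min_le_left _ _
  have hmKu : Ku ≤ 1 / m := by
    have h1 : m ≤ 1 / Ku := le_trans (min_le_right _ _) (min_le_left _ _)
    rw [le_div_iff₀ hmpos]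
    have h2 : Ku * m ≤ Ku * (1 / Ku) := mul_le_mul_of_nonneg_left h1 hKupos.le
    rw [mul_one_div, div_self hKupos.ne'] at h2
    exact h2
  refine ⟨m, ⟨hmpos, hm1⟩, fun ξ => ?_⟩
  rcases eq_or_ne ξ 0 with rfl | hne
  · have hG00 : G 0 = 0 := by
      rw [hG, norm_zero, hG₀ 0 le_rfl, intervalIntegral.integral_same]
    rw [hG00, norm_zero, Real.zero_rpow (by linarith : p ≠ 0)]
    constructor
    · simp
    · have : (0:ℝ) ≤ 1 / m := by positivity
      linarith
  · have ht : 0 < ‖ξ‖ := norm_pos_iff.mpr hne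
    have hpw : 0 ≤ ‖ξ‖ ^ p := Real.rpow_nonneg ht.le p
    rw [hG]
    constructor
    · calc m * ‖ξ‖ ^ p ≤ Kl * ‖ξ‖ ^ p := mul_le_mul_of_nonneg_right hmKl hpw
        _ ≤ G₀ ‖ξ‖ := hGlb _ ht
    · calc G₀ ‖ξ‖ ≤ C₅ * C₄ / C₁ * (‖ξ‖ + ‖ξ‖ ^ p / p) := hGub _ ht
        _ ≤ C₅ * C₄ / C₁ * (2 * (1 + ‖ξ‖ ^ p)) := by
            apply mul_le_mul_of_nonneg_left (hle2 _ ht.le) (by positivity)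
        _ = Ku * (1 + ‖ξ‖ ^ p) := by rw [hKu]; ring
        _ ≤ 1 / m * (1 + ‖ξ‖ ^ p) := by
            apply mul_le_mul_of_nonneg_right hmKu (by linarith)
end

section
/- Let α, β, γ > 0, let 1 < p < ∞, and let {a_k}_{k≥0} be a sequence of nonnegative real numbers satisfying the recursive relation α·a_k^p ≤ β·a_k + γ·a_{k−1}^p for all k ≥ 1. If γ < α, then the sequence {a_k} is bounded, i.e. there exists M > 0 with a_k ≤ M for all k. -/
/-- Let `α, β, γ > 0`, `1 < p < ∞`, and let `{a_k}` be a sequence of nonnegative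
reals satisfying `α·a_k^p ≤ β·a_k + γ·a_{k-1}^p` for all `k ≥ 1`. If `γ < α`,
then the sequence `{a_k}` is bounded. -/
theorem bounded_of_recursive_rpow_ineq
    (α β γ p : ℝ) (hα : 0 < α) (hβ : 0 < β) (hγ : 0 < γ) (hp : 1 < p)
    (a : ℕ → ℝ) (hnn : ∀ k, 0 ≤ a k)
    (hrec : ∀ k : ℕ, 1 ≤ k → α * a k ^ p ≤ β * a k + γ * a (k - 1) ^ p)
    (hγα : γ < α) :
    ∃ M : ℝ, 0 < M ∧ ∀ k, a k ≤ M := by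
  have hαγ : 0 < α - γ := by linarith
  have hp1 : 0 < p - 1 := by linarith
  set C : ℝ := (β / (α - γ)) ^ (1 / (p - 1)) with hC
  have hq : 0 < β / (α - γ) := div_pos hβ hαγ
  have hCpos : 0 < C := Real.rpow_pos_of_pos hq _
  have hCpow : C ^ (p - 1) = β / (α - γ) := by
    rw [hC, ← Real.rpow_mul hq.le, one_div, inv_mul_cancel₀ hp1.ne', Real.rpow_one]
  -- key step
  have key : ∀ k : ℕ, 1 ≤ k → a k ≤ max (a (k - 1)) C := by
    intro k hk
    by_contra h
    push_neg at h
    rw [max_lt_iff] at h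
    obtain ⟨h1, h2⟩ := h
    have hak : 0 < a k := lt_trans hCpos h2
    have hmono : a (k - 1) ^ p ≤ a k ^ p :=
      Real.rpow_le_rpow (hnn _) h1.le (by linarith)
    have h3 : (α - γ) * a k ^ p ≤ β * a k := by
      have := hrec k hk
      nlinarith [mul_le_mul_of_nonneg_left hmono hγ.le]
    have hsplit : a k ^ p = a k ^ (p - 1) * a k := by
      rw [← Real.rpow_add_one hak.ne', sub_add_cancel]
    have h4 : (α - γ) * a k ^ (p - 1) ≤ β := by
      rw [hsplit] at h3
      have := (mul_le_mul_iff_of_pos_right hak).mp (by linarith : ((α - γ) * a k ^ (p - 1)) * a k ≤ β * a k)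
      linarith
    have h5 : a k ^ (p - 1) ≤ C ^ (p - 1) := by
      rw [hCpow, le_div_iff₀ hαγ]
      linarith
    have h6 : C ^ (p - 1) < a k ^ (p - 1) :=
      Real.rpow_lt_rpow hCpos.le h2 hp1
    linarith
  have bound : ∀ k, a k ≤ max (a 0) C := by
    intro k
    induction k with
    | zero => exact le_max_left _ _
    | succ n ih =>
        have := key (n + 1) (by omega)
        simp only [Nat.add_sub_cancel] at this
        exact this.trans (max_le (ih.trans (le_refl _)) (le_max_right _ _))
  exact ⟨max (a 0) C, lt_max_of_lt_right hCpos, bound⟩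
end

section
/- Let N ≥ 1 be an integer, let p > 1 and C₃ > 0 be reals. Suppose a : ℝ^N → ℝ^N is continuous with a(0) = 0, Fréchet differentiable at every ξ ≠ 0, and its derivative Da satisfies ⟨Da(ξ)y, y⟩ ≥ C₃|ξ|^{p−2}|y|² for all ξ ≠ 0 and all y ∈ ℝ^N. Then ⟨a(ξ), ξ⟩ ≥ (C₃/(p−1))·|ξ|^p for every ξ ∈ ℝ^N. -/
open scoped RealInnerProductSpace

/-- If `a : ℝ^N → ℝ^N` is continuous with `a(0) = 0`, Fréchet differentiable at
every `ξ ≠ 0`, and `⟨Da(ξ)y, y⟩ ≥ C₃|ξ|^(p-2)|y|²` for all `ξ ≠ 0` and all `y`,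
then `⟨a(ξ), ξ⟩ ≥ (C₃/(p-1))·|ξ|^p` for every `ξ`. -/
theorem coercivity_of_ellipticity
    {N : ℕ} (hN : 1 ≤ N) (p C₃ : ℝ) (hp : 1 < p) (hC₃ : 0 < C₃)
    (a : EuclideanSpace ℝ (Fin N) → EuclideanSpace ℝ (Fin N))
    (Da : EuclideanSpace ℝ (Fin N) →
      (EuclideanSpace ℝ (Fin N) →L[ℝ] EuclideanSpace ℝ (Fin N)))
    (hacont : Continuous a) (ha0 : a 0 = 0)
    (hDiff : ∀ ξ : EuclideanSpace ℝ (Fin N), ξ ≠ 0 → HasFDerivAt a (Da ξ) ξ)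
    (hell : ∀ ξ : EuclideanSpace ℝ (Fin N), ξ ≠ 0 →
      ∀ y : EuclideanSpace ℝ (Fin N), C₃ * ‖ξ‖ ^ (p - 2) * ‖y‖ ^ 2 ≤ ⟪Da ξ y, y⟫) :
    ∀ ξ : EuclideanSpace ℝ (Fin N), (C₃ / (p - 1)) * ‖ξ‖ ^ p ≤ ⟪a ξ, ξ⟫ := by
  intro ξ
  have hp1 : (0:ℝ) < p - 1 := by linarith
  rcases eq_or_ne ξ 0 with rfl | hξ
  · simp [Real.zero_rpow (by positivity : p ≠ 0), ha0]
  · have hξn : 0 < ‖ξ‖ := norm_pos_iff.mpr hξ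
    set c : ℝ := C₃ * ‖ξ‖ ^ p / (p - 1) with hc
    set F : ℝ → ℝ := fun t => ⟪a (t • ξ), ξ⟫ - c * t ^ (p - 1) with hF
    have hder : ∀ t ∈ Set.Ioo (0:ℝ) 1,
        HasDerivAt F (⟪Da (t • ξ) ξ, ξ⟫ - c * ((p - 1) * t ^ (p - 2))) t := by
      intro t ht
      have htξ : t • ξ ≠ 0 := smul_ne_zero (ne_of_gt ht.1) hξ
      have h1 : HasDerivAt (fun t : ℝ => t • ξ) ξ t := by
        simpa using (hasDerivAt_id t).smul_const ξ
      have h2 : HasDerivAt (fun t : ℝ => a (t • ξ)) (Da (t • ξ) ξ) t :=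
        (hDiff _ htξ).comp_hasDerivAt t h1
      have h3 : HasDerivAt (fun t : ℝ => ⟪a (t • ξ), ξ⟫) ⟪Da (t • ξ) ξ, ξ⟫ t := by
        have := ((innerSL ℝ ξ).hasFDerivAt.comp_hasDerivAt t h2)
        simpa only [innerSL_apply_apply, Function.comp_def, real_inner_comm] using this
      have h4 : HasDerivAt (fun t : ℝ => c * t ^ (p - 1)) (c * ((p - 1) * t ^ (p - 2))) t := by
        have := (Real.hasDerivAt_rpow_const (x := t) (p := p - 1)
          (Or.inl (ne_of_gt ht.1))).const_mul c
        have he : p - 1 - 1 = p - 2 := by ring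
        simpa [he] using this
      exact h3.sub h4
    have hcont : ContinuousOn F (Set.Icc 0 1) := by
      apply ContinuousOn.sub
      · exact ((hacont.comp (continuous_id.smul continuous_const)).inner
          continuous_const).continuousOn
      · apply Continuous.continuousOn
        exact continuous_const.mul (continuous_iff_continuousAt.mpr fun x =>
          Real.continuousAt_rpow_const x (p - 1) (Or.inr (le_of_lt hp1)))
    have hmono : MonotoneOn F (Set.Icc 0 1) := by
      apply monotoneOn_of_deriv_nonneg (convex_Icc 0 1) hcont
      · intro x hx
        rw [interior_Icc] at hx
        exact ((hder x hx).differentiableAt).differentiableWithinAt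
      · intro x hx
        rw [interior_Icc] at hx
        rw [(hder x hx).deriv]
        have htξ : x • ξ ≠ 0 := smul_ne_zero (ne_of_gt hx.1) hξ
        have key := hell (x • ξ) htξ ξ
        have hnorm : ‖x • ξ‖ = x * ‖ξ‖ := by
          rw [norm_smul, Real.norm_eq_abs, abs_of_pos hx.1]
        have h5 : ‖x • ξ‖ ^ (p - 2) = x ^ (p - 2) * ‖ξ‖ ^ (p - 2) := by
          rw [hnorm, Real.mul_rpow (le_of_lt hx.1) (le_of_lt hξn)]
        have h6 : ‖ξ‖ ^ (p - 2) * ‖ξ‖ ^ 2 = ‖ξ‖ ^ p := by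
          rw [← Real.rpow_natCast ‖ξ‖ 2, ← Real.rpow_add hξn]
          norm_num
        have h7 : C₃ * ‖x • ξ‖ ^ (p - 2) * ‖ξ‖ ^ 2 = C₃ * ‖ξ‖ ^ p * x ^ (p - 2) := by
          rw [h5]; rw [← h6]; ring
        have h8 : c * ((p - 1) * x ^ (p - 2)) = C₃ * ‖ξ‖ ^ p * x ^ (p - 2) := by
          rw [hc]; field_simp
        rw [h8]
        linarith [key, h7.symm.le.trans key]
    have h01 := hmono (Set.left_mem_Icc.mpr zero_le_one)
      (Set.right_mem_Icc.mpr zero_le_one) zero_le_one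
    have hF0 : F 0 = 0 := by
      simp [hF, ha0, Real.zero_rpow (ne_of_gt hp1)]
    have hF1 : F 1 = ⟪a ξ, ξ⟫ - c := by
      simp [hF]
    rw [hF0, hF1] at h01
    have : c = C₃ / (p - 1) * ‖ξ‖ ^ p := by rw [hc]; ring
    linarith [this ▸ h01]
end

section
/- Let N ≥ 1 be an integer and let p > 1 be real. Define a(ξ) = (1 + |ξ|²)^{(p−2)/2}·ξ for ξ ∈ ℝ^N. Then a is Fréchet differentiable at every ξ ∈ ℝ^N and its derivative satisfies, for all ξ, y ∈ ℝ^N: ⟨Da(ξ)y, y⟩ ≥ min{1, p−1}·(1 + |ξ|²)^{(p−2)/2}·|y|², and ‖Da(ξ)‖ ≤ max{1, p−1}·(1 + |ξ|²)^{(p−2)/2}, where ‖·‖ is the operator norm. -/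
open scoped RealInnerProductSpace

/-!
The derivative of `a` at `ξ` is `g • id + (p - 2) A • |ξ⟩⟨ξ|` with `A = (1 + |ξ|²)^((p-4)/2)`
and `g = A (1 + |ξ|²)`: a multiple of the identity plus a rank-one operator along `ξ`. It is
self-adjoint with eigenvalues `g` on `ξ^⊥` and `g + (p - 2) A |ξ|² = A (1 + (p - 1)|ξ|²)`
along `ξ`, so its quadratic form and its norm are controlled by these two numbers, both of
which lie between `min{1, p-1} g` and `max{1, p-1} g`.
-/

lemma add_mul_le_of_endpoints {a c x X M : ℝ} (hx : 0 ≤ x) (hxX : x ≤ X)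
    (h₀ : a ≤ M) (h₁ : a + c * X ≤ M) : a + c * x ≤ M := by
  rcases le_total c 0 with hc | hc
  · linarith [mul_nonpos_of_nonpos_of_nonneg hc hx]
  · linarith [mul_le_mul_of_nonneg_left hxX hc]

lemma le_add_mul_of_endpoints {a c x X m : ℝ} (hx : 0 ≤ x) (hxX : x ≤ X)
    (h₀ : m ≤ a) (h₁ : m ≤ a + c * X) : m ≤ a + c * x := by
  linarith [add_mul_le_of_endpoints (a := -a) (c := -c) (M := -m) hx hxX (by linarith)
    (by linarith)]

section RankOnePerturbation

variable {E : Type*} [NormedAddCommGroup E] [InnerProductSpace ℝ E]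

open InnerProductSpace (rankOne rankOne_apply)

lemma real_inner_sq_le (ξ y : E) : ⟪ξ, y⟫ ^ 2 ≤ ‖ξ‖ ^ 2 * ‖y‖ ^ 2 := by
  rw [← mul_pow, ← sq_abs]
  exact pow_le_pow_left₀ (abs_nonneg _) (abs_real_inner_le_norm ξ y) 2

variable (α β : ℝ) (ξ : E)

lemma inner_smul_id_add_rankOne_apply_self (y : E) :
    ⟪(α • ContinuousLinearMap.id ℝ E + β • rankOne ℝ ξ ξ) y, y⟫
      = α * ‖y‖ ^ 2 + β * ⟪ξ, y⟫ ^ 2 := by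
  simp only [add_apply, smul_apply, ContinuousLinearMap.id_apply, rankOne_apply, inner_add_left,
    real_inner_smul_left, real_inner_self_eq_norm_sq]
  ring

lemma norm_smul_id_add_rankOne_apply_sq (y : E) :
    ‖(α • ContinuousLinearMap.id ℝ E + β • rankOne ℝ ξ ξ) y‖ ^ 2
      = α ^ 2 * ‖y‖ ^ 2 + (2 * α * β + β ^ 2 * ‖ξ‖ ^ 2) * ⟪ξ, y⟫ ^ 2 := by
  simp only [← real_inner_self_eq_norm_sq, add_apply, smul_apply, ContinuousLinearMap.id_apply,
    rankOne_apply, real_inner_add_add_self, real_inner_smul_left, real_inner_smul_right,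
    real_inner_comm y ξ]
  ring

variable {α β}

lemma le_inner_smul_id_add_rankOne_apply_self {m : ℝ} (hα : m ≤ α)
    (hαβ : m ≤ α + β * ‖ξ‖ ^ 2) (y : E) :
    m * ‖y‖ ^ 2 ≤ ⟪(α • ContinuousLinearMap.id ℝ E + β • rankOne ℝ ξ ξ) y, y⟫ := by
  rw [inner_smul_id_add_rankOne_apply_self]
  refine le_add_mul_of_endpoints (sq_nonneg _) (real_inner_sq_le ξ y) ?_ ?_
  · gcongr
  · nlinarith [mul_le_mul_of_nonneg_right hαβ (sq_nonneg ‖y‖)]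

lemma norm_smul_id_add_rankOne_le {M : ℝ} (hM : 0 ≤ M) (hα : |α| ≤ M)
    (hαβ : |α + β * ‖ξ‖ ^ 2| ≤ M) :
    ‖α • ContinuousLinearMap.id ℝ E + β • rankOne ℝ ξ ξ‖ ≤ M := by
  refine ContinuousLinearMap.opNorm_le_bound _ hM fun y => ?_
  have hα2 : α ^ 2 ≤ M ^ 2 := sq_le_sq' (abs_le.1 hα).1 (abs_le.1 hα).2
  have hαβ2 : (α + β * ‖ξ‖ ^ 2) ^ 2 ≤ M ^ 2 := sq_le_sq' (abs_le.1 hαβ).1 (abs_le.1 hαβ).2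
  refine (sq_le_sq₀ (norm_nonneg _) (by positivity)).1 ?_
  rw [norm_smul_id_add_rankOne_apply_sq, mul_pow]
  refine add_mul_le_of_endpoints (sq_nonneg _) (real_inner_sq_le ξ y) ?_ ?_
  · gcongr
  · nlinarith [mul_le_mul_of_nonneg_right hαβ2 (sq_nonneg ‖y‖)]

lemma hasFDerivAt_one_add_norm_sq_rpow_smul (r : ℝ) :
    HasFDerivAt (fun x : E => (1 + ‖x‖ ^ 2) ^ r • x)
      ((1 + ‖ξ‖ ^ 2) ^ r • ContinuousLinearMap.id ℝ E
        + (2 * r * (1 + ‖ξ‖ ^ 2) ^ (r - 1)) • rankOne ℝ ξ ξ) ξ := by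
  have hweight := (Real.hasDerivAt_rpow_const (p := r) (Or.inl (by positivity))).comp_hasFDerivAt ξ
    ((hasStrictFDerivAt_norm_sq ξ).hasFDerivAt.const_add 1)
  refine (hweight.smul (hasFDerivAt_id ξ)).congr_fderiv ?_
  ext y
  simp only [add_apply, smul_apply, ContinuousLinearMap.id_apply, rankOne_apply,
    ContinuousLinearMap.smulRight_apply, innerSL_apply_apply, Function.comp_apply, id, smul_smul,
    nsmul_eq_mul]
  module

end RankOnePerturbation

lemma min_one_sub_one_mul_le {p s : ℝ} (hs : 0 ≤ s) :
    min 1 (p - 1) * (1 + s) ≤ 1 + (p - 1) * s := by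
  rcases le_total 1 (p - 1) with hp | hp
  · rw [min_eq_left hp]; nlinarith
  · rw [min_eq_right hp]; linarith

lemma abs_le_max_one_sub_one_mul {p s : ℝ} (hp : 0 ≤ p) (hs : 0 ≤ s) :
    |1 + (p - 1) * s| ≤ max 1 (p - 1) * (1 + s) := by
  rcases le_total 1 (p - 1) with hp1 | hp1
  · rw [max_eq_right hp1, abs_le]; constructor <;> nlinarith
  · rw [max_eq_left hp1, abs_le]; constructor <;> nlinarith

theorem p_mean_curvature_structure_conditions_general
    {N : ℕ} (p : ℝ) (hp : 1 < p)
    (a : EuclideanSpace ℝ (Fin N) → EuclideanSpace ℝ (Fin N))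
    (ha : ∀ ξ : EuclideanSpace ℝ (Fin N),
      a ξ = ((1 + ‖ξ‖ ^ 2) ^ ((p - 2) / 2)) • ξ) :
    ∀ ξ : EuclideanSpace ℝ (Fin N),
      ∃ Da : EuclideanSpace ℝ (Fin N) →L[ℝ] EuclideanSpace ℝ (Fin N),
        HasFDerivAt a Da ξ ∧
        (∀ y : EuclideanSpace ℝ (Fin N),
          min 1 (p - 1) * (1 + ‖ξ‖ ^ 2) ^ ((p - 2) / 2) * ‖y‖ ^ 2 ≤ ⟪Da y, y⟫) ∧
        ‖Da‖ ≤ max 1 (p - 1) * (1 + ‖ξ‖ ^ 2) ^ ((p - 2) / 2) := by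
  intro ξ
  rw [show a = _ from funext ha]
  refine ⟨_, hasFDerivAt_one_add_norm_sq_rpow_smul ξ _, ?_⟩
  set s := ‖ξ‖ ^ 2
  have hs : 0 ≤ s := sq_nonneg _
  set A := (1 + s) ^ ((p - 2) / 2 - 1)
  have hA : 0 < A := by positivity
  have hg : (1 + s) ^ ((p - 2) / 2) = A * (1 + s) := by
    rw [← Real.rpow_add_one (by positivity)]; ring_nf
  have hξ : A * (1 + s) + 2 * ((p - 2) / 2) * A * s = A * (1 + (p - 1) * s) := by ring
  rw [hg]
  constructor
  · refine le_inner_smul_id_add_rankOne_apply_self ξ ?_ ?_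
    · exact mul_le_of_le_one_left (by positivity) (min_le_left _ _)
    · rw [hξ, mul_left_comm]
      exact mul_le_mul_of_nonneg_left (min_one_sub_one_mul_le hs) hA.le
  · refine norm_smul_id_add_rankOne_le ξ (by positivity) ?_ ?_
    · rw [abs_of_pos (by positivity)]
      exact le_mul_of_one_le_left (by positivity) (le_max_left _ _)
    · rw [hξ, abs_mul, abs_of_pos hA, mul_left_comm]
      exact mul_le_mul_of_nonneg_left (abs_le_max_one_sub_one_mul (by linarith) hs) hA.le

/-- The map `a(ξ) = (1 + |ξ|²)^((p-2)/2)ξ` generating the generalized `p`-mean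
curvature operator is Fréchet differentiable at every `ξ`, with
`⟨Da(ξ)y, y⟩ ≥ min{1, p-1}·(1 + |ξ|²)^((p-2)/2)·|y|²` and
`‖Da(ξ)‖ ≤ max{1, p-1}·(1 + |ξ|²)^((p-2)/2)`. -/
theorem p_mean_curvature_structure_conditions
    {N : ℕ} (hN : 1 ≤ N) (p : ℝ) (hp : 1 < p)
    (a : EuclideanSpace ℝ (Fin N) → EuclideanSpace ℝ (Fin N))
    (ha : ∀ ξ : EuclideanSpace ℝ (Fin N),
      a ξ = ((1 + ‖ξ‖ ^ 2) ^ ((p - 2) / 2)) • ξ) :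
    ∀ ξ : EuclideanSpace ℝ (Fin N),
      ∃ Da : EuclideanSpace ℝ (Fin N) →L[ℝ] EuclideanSpace ℝ (Fin N),
        HasFDerivAt a Da ξ ∧
        (∀ y : EuclideanSpace ℝ (Fin N),
          min 1 (p - 1) * (1 + ‖ξ‖ ^ 2) ^ ((p - 2) / 2) * ‖y‖ ^ 2 ≤ ⟪Da y, y⟫) ∧
        ‖Da‖ ≤ max 1 (p - 1) * (1 + ‖ξ‖ ^ 2) ^ ((p - 2) / 2) :=
  p_mean_curvature_structure_conditions_general p hp a ha
end

section
/- Let N ≥ 1 be an integer and let a₀ : (0,∞) → (0,∞) be such that the map t ↦ t·a₀(t) is strictly increasing on (0,∞) and lim_{t→0⁺} t·a₀(t) = 0. Define a : ℝ^N → ℝ^N by a(ξ) = a₀(|ξ|)ξ for ξ ≠ 0 and a(0) = 0. Then a is strictly monotone: ⟨a(ξ) − a(η), ξ − η⟩ > 0 for all ξ, η ∈ ℝ^N with ξ ≠ η. -/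
open scoped RealInnerProductSpace

/-! Write `r = ‖ξ‖`, `s = ‖η‖`. Expanding the inner product gives
`⟪a₀ r • ξ - a₀ s • η, ξ - η⟫ = (r a₀(r) - s a₀(s))(r - s) + (a₀(r) + a₀(s))(r s - ⟪ξ, η⟫)`.
The first term is positive when `r ≠ s` by strict monotonicity of `t ↦ t a₀(t)`, the second is
nonnegative by Cauchy–Schwarz and positive when `r = s`, since then equality in Cauchy–Schwarz
forces `ξ = η`. If one of the vectors vanishes, the inner product is just `a₀(r) r²` or `a₀(s) s²`. -/

lemma StrictMonoOn.sub_mul_sub_pos {R : Type*} [Ring R] [LinearOrder R] [IsStrictOrderedRing R]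
    {f : R → R} {s : Set R} (hf : StrictMonoOn f s) {a b : R} (ha : a ∈ s) (hb : b ∈ s)
    (hab : a ≠ b) : 0 < (f a - f b) * (a - b) := by
  rcases hab.lt_or_gt with h | h
  · exact mul_pos_of_neg_of_neg (sub_neg.2 (hf ha hb h)) (sub_neg.2 h)
  · exact mul_pos (sub_pos.2 (hf hb ha h)) (sub_pos.2 h)

section RadialMap

variable {E : Type*} [NormedAddCommGroup E] [InnerProductSpace ℝ E]

lemma real_inner_smul_sub_smul_sub_eq (c d : ℝ) (x y : E) :
    ⟪c • x - d • y, x - y⟫ =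
      (‖x‖ * c - ‖y‖ * d) * (‖x‖ - ‖y‖) + (c + d) * (‖x‖ * ‖y‖ - ⟪x, y⟫) := by
  simp only [inner_sub_left, inner_sub_right, real_inner_smul_left, real_inner_self_eq_norm_sq,
    real_inner_comm x y]
  ring

lemma real_inner_lt_norm_mul_norm_of_norm_eq {x y : E} (hx : x ≠ 0) (hxy : x ≠ y)
    (hnorm : ‖x‖ = ‖y‖) : ⟪x, y⟫ < ‖x‖ * ‖y‖ := by
  rw [inner_lt_norm_mul_iff_real, hnorm, Ne, smul_right_inj (hnorm ▸ norm_ne_zero_iff.2 hx)]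
  exact hxy

variable {a₀ : ℝ → ℝ}

lemma real_inner_radial_self_pos (ha₀pos : ∀ t : ℝ, 0 < t → 0 < a₀ t) {x : E} (hx : x ≠ 0) :
    0 < ⟪a₀ ‖x‖ • x, x⟫ := by
  have hr : 0 < ‖x‖ := norm_pos_iff.2 hx
  rw [real_inner_smul_left, real_inner_self_eq_norm_sq]
  exact mul_pos (ha₀pos _ hr) (pow_pos hr 2)

lemma real_inner_radial_sub_radial_pos_of_ne_zero (ha₀pos : ∀ t : ℝ, 0 < t → 0 < a₀ t)
    (hmono : StrictMonoOn (fun t : ℝ => t * a₀ t) (Set.Ioi 0))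
    {x y : E} (hx : x ≠ 0) (hy : y ≠ 0) (hxy : x ≠ y) :
    0 < ⟪a₀ ‖x‖ • x - a₀ ‖y‖ • y, x - y⟫ := by
  have hr : 0 < ‖x‖ := norm_pos_iff.2 hx
  have hs : 0 < ‖y‖ := norm_pos_iff.2 hy
  have hcoeff : 0 < a₀ ‖x‖ + a₀ ‖y‖ := add_pos (ha₀pos _ hr) (ha₀pos _ hs)
  rw [real_inner_smul_sub_smul_sub_eq]
  rcases eq_or_ne ‖x‖ ‖y‖ with hnorm | hnorm
  · have hCS : 0 < ‖x‖ * ‖y‖ - ⟪x, y⟫ :=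
      sub_pos.2 (real_inner_lt_norm_mul_norm_of_norm_eq hx hxy hnorm)
    rw [sub_eq_zero.2 hnorm, mul_zero, zero_add]
    exact mul_pos hcoeff hCS
  · have hCS : 0 ≤ ‖x‖ * ‖y‖ - ⟪x, y⟫ := sub_nonneg.2 (real_inner_le_norm x y)
    exact add_pos_of_pos_of_nonneg (hmono.sub_mul_sub_pos hr hs hnorm)
      (mul_nonneg hcoeff.le hCS)

lemma real_inner_radial_sub_radial_pos (ha₀pos : ∀ t : ℝ, 0 < t → 0 < a₀ t)
    (hmono : StrictMonoOn (fun t : ℝ => t * a₀ t) (Set.Ioi 0)) {x y : E} (hxy : x ≠ y) :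
    0 < ⟪a₀ ‖x‖ • x - a₀ ‖y‖ • y, x - y⟫ := by
  wlog hy : y ≠ 0 generalizing x y
  · rw [← inner_neg_neg, neg_sub, neg_sub]
    exact this hxy.symm (by rintro rfl; exact hy hxy.symm)
  rcases eq_or_ne x 0 with rfl | hx
  · simpa only [smul_zero, zero_sub, inner_neg_neg] using real_inner_radial_self_pos ha₀pos hy
  · exact real_inner_radial_sub_radial_pos_of_ne_zero ha₀pos hmono hx hy hxy

end RadialMap

theorem radial_map_strictMono_general
    {N : ℕ}
    (a₀ : ℝ → ℝ) (ha₀pos : ∀ t : ℝ, 0 < t → 0 < a₀ t)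
    (hmono : StrictMonoOn (fun t : ℝ => t * a₀ t) (Set.Ioi (0:ℝ)))
    (a : EuclideanSpace ℝ (Fin N) → EuclideanSpace ℝ (Fin N))
    (ha0 : a 0 = 0)
    (ha : ∀ ξ : EuclideanSpace ℝ (Fin N), ξ ≠ 0 → a ξ = a₀ ‖ξ‖ • ξ) :
    ∀ ξ η : EuclideanSpace ℝ (Fin N), ξ ≠ η → 0 < ⟪a ξ - a η, ξ - η⟫ := by
  have ha_eq : a = fun ξ => a₀ ‖ξ‖ • ξ := by
    funext ξ
    rcases eq_or_ne ξ 0 with rfl | hξ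
    · rw [ha0, smul_zero]
    · exact ha ξ hξ
  subst ha_eq
  exact fun ξ η hne => real_inner_radial_sub_radial_pos ha₀pos hmono hne

/-- Let `a₀ : (0,∞) → (0,∞)` be such that `t ↦ t·a₀(t)` is strictly increasing
on `(0,∞)` and `t·a₀(t) → 0` as `t → 0⁺`. Then the radial map `a(ξ) = a₀(|ξ|)ξ`
(with `a(0) = 0`) is strictly monotone:
`⟨a(ξ) − a(η), ξ − η⟩ > 0` whenever `ξ ≠ η`. -/
theorem radial_map_strictMono
    {N : ℕ} (hN : 1 ≤ N)
    (a₀ : ℝ → ℝ) (ha₀pos : ∀ t : ℝ, 0 < t → 0 < a₀ t)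
    (hmono : StrictMonoOn (fun t : ℝ => t * a₀ t) (Set.Ioi (0:ℝ)))
    (hlim : Filter.Tendsto (fun t : ℝ => t * a₀ t)
      (nhdsWithin 0 (Set.Ioi 0)) (nhds 0))
    (a : EuclideanSpace ℝ (Fin N) → EuclideanSpace ℝ (Fin N))
    (ha0 : a 0 = 0)
    (ha : ∀ ξ : EuclideanSpace ℝ (Fin N), ξ ≠ 0 → a ξ = a₀ ‖ξ‖ • ξ) :
    ∀ ξ η : EuclideanSpace ℝ (Fin N), ξ ≠ η → 0 < ⟪a ξ - a η, ξ - η⟫ :=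
  radial_map_strictMono_general a₀ ha₀pos hmono a ha0 ha
end
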